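/- arXiv:2104.02937 — 3 statements merged into one kernel-verified Lean document; each statement's English description precedes it below -/
import Mathlib

section
/- For integers k ≥ n > ℓ ≥ 1 and real ε > 0, we have ℓ(k−ℓ)·(1/k + 1/k^(2+ε−log_k(k^ε−1))) ≤ ℓ(1 − ℓ/k^(1+ε)), provided k^ε > 1. -/
/-!
Write `e = k ^ ε`. The exponent is designed so that `k ^ (2 + ε - log_k (e - 1)) = k² e / (e - 1)`,
which turns both sides into rational functions of `k`, `ℓ` and `e`. After clearing the common
denominator `k² e`, the right side exceeds the left by `ℓ (e - 1) (k (ℓ - 1) + ℓ)`, which is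
nonnegative since `e > 1` and `ℓ ≥ 1`.
-/

open Real

lemma Real.rpow_sub_logb {b y : ℝ} (hb : 0 < b) (hb₁ : b ≠ 1) (hy : 0 < y) (t : ℝ) :
    b ^ (t - logb b y) = b ^ t / y := by
  rw [rpow_sub hb, rpow_logb hb hb₁ hy]

lemma Nat.one_lt_of_one_lt_cast_rpow {k : ℕ} {ε : ℝ} (h : 1 < (k : ℝ) ^ ε) : 1 < (k : ℝ) := by
  rcases (one_lt_rpow_iff k.cast_nonneg).1 h with ⟨hk, -⟩ | ⟨hk₀, hk₁, -⟩
  · exact hk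
  · exact absurd (Nat.cast_lt_one.1 hk₁) (Nat.cast_pos.1 hk₀).ne'

lemma potential_le_threshold {k ℓ e : ℝ} (hk : 0 < k) (he : 1 < e) (hℓ : 1 ≤ ℓ) :
    ℓ * (k - ℓ) * (1 / k + 1 / (k ^ 2 * e / (e - 1))) ≤ ℓ * (1 - ℓ / (k * e)) := by
  have he₀ : 0 < e := zero_lt_one.trans he
  have gap : ℓ * (1 - ℓ / (k * e)) - ℓ * (k - ℓ) * (1 / k + 1 / (k ^ 2 * e / (e - 1)))
      = ℓ * (e - 1) * (k * (ℓ - 1) + ℓ) / (k ^ 2 * e) := by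
    field_simp
    ring
  have : 0 ≤ ℓ * (e - 1) * (k * (ℓ - 1) + ℓ) / (k ^ 2 * e) := by
    have : 0 ≤ k * (ℓ - 1) := mul_nonneg hk.le (by linarith)
    have : 0 ≤ e - 1 := by linarith
    positivity
  linarith

theorem stmt_5_general (k ℓ : ℕ) (hℓ : 1 ≤ ℓ)
    (ε : ℝ) (hkε : (k : ℝ) ^ ε > 1) :
    (ℓ : ℝ) * ((k : ℝ) - ℓ) *
      (1 / k + 1 / (k : ℝ) ^ (2 + ε - Real.logb k ((k : ℝ) ^ ε - 1)))
    ≤ (ℓ : ℝ) * (1 - (ℓ : ℝ) / (k : ℝ) ^ (1 + ε)) := by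
  have hk₁ : 1 < (k : ℝ) := Nat.one_lt_of_one_lt_cast_rpow hkε
  have hk₀ : 0 < (k : ℝ) := zero_lt_one.trans hk₁
  rw [rpow_sub_logb hk₀ hk₁.ne' (sub_pos.2 hkε), rpow_add hk₀, rpow_add hk₀, rpow_one,
    rpow_two]
  exact potential_le_threshold hk₀ hkε (Nat.one_le_cast.2 hℓ)

theorem stmt_5 (k n ℓ : ℕ) (hℓ : 1 ≤ ℓ) (hn : ℓ < n) (hk : n ≤ k)
    (ε : ℝ) (hε : 0 < ε) (hkε : (k : ℝ) ^ ε > 1) :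
    (ℓ : ℝ) * ((k : ℝ) - ℓ) *
      (1 / k + 1 / (k : ℝ) ^ (2 + ε - Real.logb k ((k : ℝ) ^ ε - 1)))
    ≤ (ℓ : ℝ) * (1 - (ℓ : ℝ) / (k : ℝ) ^ (1 + ε)) :=
  stmt_5_general k ℓ hℓ ε hkε
end

section
/- Let n, ℓ, k be integers with k > n > ℓ ≥ 1, and let γ, δ be reals with γ > log_k(n − ℓ + 1) and δ > log_k(k^γ(n−ℓ)/(k^γ − (n−ℓ) − 1)), assuming k^γ > n − ℓ + 1. Then (n−ℓ)(1 + 1/k^δ) < (k−ℓ)(1 − 1/k^γ). -/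
/-! With `a = n - ℓ`, `G = k ^ γ` and `D = k ^ δ`, the bound on `δ` says exactly
`D > G a / (G - a - 1)`, i.e. `a / D < 1 - (a + 1) / G`. Adding `a` gives
`a (1 + 1 / D) < (a + 1) (1 - 1 / G)`, and `a + 1 = n - ℓ + 1 ≤ k - ℓ`. -/

lemma mul_one_add_inv_lt_mul_one_sub_inv {a c G D : ℝ} (ha : 0 < a) (hG : a + 1 < G)
    (hD : G * a / (G - a - 1) < D) (hc : a + 1 ≤ c) :
    a * (1 + 1 / D) < c * (1 - 1 / G) := by
  have hGa : 0 < G - a - 1 := by linarith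
  have hG0 : 0 < G := by linarith
  have hT : 0 < G * a / (G - a - 1) := by positivity
  have ha_div : a / D < (G - a - 1) / G :=
    calc a / D < a / (G * a / (G - a - 1)) := div_lt_div_of_pos_left ha hT hD
      _ = (G - a - 1) / G := by field_simp
  have hG_inv : 0 ≤ 1 - 1 / G := by
    rw [sub_nonneg, div_le_one hG0]
    linarith
  calc a * (1 + 1 / D) = a + a / D := by ring
    _ < a + (G - a - 1) / G := by linarith
    _ = (a + 1) * (1 - 1 / G) := by field_simp; ring
    _ ≤ c * (1 - 1 / G) := mul_le_mul_of_nonneg_right hc hG_inv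

theorem stmt_9_general (n ℓ k : ℕ) (hn : ℓ < n) (hk : n < k)
    (γ δ : ℝ)
    (hkγ : (k : ℝ) ^ γ > (n : ℝ) - ℓ + 1)
    (hδ : δ > Real.logb k ((k : ℝ) ^ γ * ((n : ℝ) - ℓ) /
      ((k : ℝ) ^ γ - ((n : ℝ) - ℓ) - 1))) :
    ((n : ℝ) - ℓ) * (1 + 1 / (k : ℝ) ^ δ) <
    ((k : ℝ) - ℓ) * (1 - 1 / (k : ℝ) ^ γ) := by
  have hnℓ : (ℓ : ℝ) + 1 ≤ n := by exact_mod_cast hn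
  have hkn : (n : ℝ) + 1 ≤ k := by exact_mod_cast hk
  have hk1 : (1 : ℝ) < k := by linarith [(ℓ.cast_nonneg : (0 : ℝ) ≤ ℓ)]
  have hGa : 0 < (k : ℝ) ^ γ - ((n : ℝ) - ℓ) - 1 := by linarith
  have hT : 0 < (k : ℝ) ^ γ * ((n : ℝ) - ℓ) / ((k : ℝ) ^ γ - ((n : ℝ) - ℓ) - 1) := by
    have : 0 < (n : ℝ) - ℓ := by linarith
    have : 0 < (k : ℝ) ^ γ := by linarith
    positivity
  exact mul_one_add_inv_lt_mul_one_sub_inv (by linarith) hkγ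
    ((Real.logb_lt_iff_lt_rpow hk1 hT).mp hδ) (by linarith)

theorem stmt_9 (n ℓ k : ℕ) (hℓ : 1 ≤ ℓ) (hn : ℓ < n) (hk : n < k)
    (γ δ : ℝ)
    (hkγ : (k : ℝ) ^ γ > (n : ℝ) - ℓ + 1)
    (hγ : γ > Real.logb k ((n : ℝ) - ℓ + 1))
    (hδ : δ > Real.logb k ((k : ℝ) ^ γ * ((n : ℝ) - ℓ) /
      ((k : ℝ) ^ γ - ((n : ℝ) - ℓ) - 1))) :
    ((n : ℝ) - ℓ) * (1 + 1 / (k : ℝ) ^ δ) <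
    ((k : ℝ) - ℓ) * (1 - 1 / (k : ℝ) ^ γ) :=
  stmt_9_general n ℓ k hn hk γ δ hkγ hδ
end

section
/- Let n, ℓ, k be integers with 1 < k < n and ℓ ≥ 1, and let γ, δ be reals with γ > log_k(n−1) and δ > log_k(n·k^γ/(n·k^γ − (n−1)(k^γ+1))), assuming n·k^γ − (n−1)(k^γ+1) > 0. Then (n−ℓ)(1 − 1/k^δ) > (k−ℓ)(1 + 1/k^γ). -/
/-!
Write `A = k^γ`. The bound on `δ` says `k^δ > n A / (n A - (n-1)(A+1))`, i.e.
`1 - 1/k^δ > (n-1)(A+1)/(n A) = (1 - 1/n)(1 + 1/A)`. Since `k ≤ n - 1`, we have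
`(n - ℓ)(1 - 1/n) ≥ k - ℓ`, and multiplying by `1 + 1/A` gives the claim.
-/

theorem div_lt_one_sub_one_div {M N X : ℝ} (hN : 0 < N) (hNM : 0 < N - M)
    (hX : N / (N - M) < X) : M / N < 1 - 1 / X := by
  have hinv : 1 / X < (N - M) / N := by
    simpa only [one_div_div] using one_div_lt_one_div_of_lt (by positivity) hX
  have hsplit : M / N = 1 - (N - M) / N := by field_simp; ring
  linarith

theorem sub_le_sub_mul_sub_one_div {n k ℓ : ℝ} (hn : 0 < n) (hℓ : 0 ≤ ℓ) (hkn : k + 1 ≤ n) :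
    k - ℓ ≤ (n - ℓ) * (n - 1) / n := by
  rw [le_div_iff₀ hn]
  nlinarith

theorem sub_mul_one_add_inv_le {n k ℓ A : ℝ} (hn : 0 < n) (hA : 0 < A) (hℓ : 0 ≤ ℓ)
    (hkn : k + 1 ≤ n) :
    (k - ℓ) * (1 + 1 / A) ≤ (n - ℓ) * ((n - 1) * (A + 1) / (n * A)) := by
  have hfactor : (n - ℓ) * ((n - 1) * (A + 1) / (n * A)) = (n - ℓ) * (n - 1) / n * (1 + 1 / A) := by
    field_simp
  rw [hfactor]
  exact mul_le_mul_of_nonneg_right (sub_le_sub_mul_sub_one_div hn hℓ hkn) (by positivity)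

theorem stmt_10_general (n ℓ k : ℕ) (hℓn : ℓ < n) (hk1 : 1 < k)
    (hk : k < n) (γ δ : ℝ)
    (hpos : (n : ℝ) * (k : ℝ) ^ γ - ((n : ℝ) - 1) * ((k : ℝ) ^ γ + 1) > 0)
    (hδ : δ > Real.logb k ((n : ℝ) * (k : ℝ) ^ γ /
      ((n : ℝ) * (k : ℝ) ^ γ - ((n : ℝ) - 1) * ((k : ℝ) ^ γ + 1)))) :
    ((n : ℝ) - ℓ) * (1 - 1 / (k : ℝ) ^ δ) >
    ((k : ℝ) - ℓ) * (1 + 1 / (k : ℝ) ^ γ) := by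
  have hk1' : (1 : ℝ) < k := by exact_mod_cast hk1
  have hkn : (k : ℝ) + 1 ≤ n := by exact_mod_cast hk
  have hℓn' : (ℓ : ℝ) < n := by exact_mod_cast hℓn
  have hn : (0 : ℝ) < n := by linarith
  have hA : (0 : ℝ) < (k : ℝ) ^ γ := by positivity
  have hX := (Real.logb_lt_iff_lt_rpow hk1' (by positivity)).mp hδ
  calc ((k : ℝ) - ℓ) * (1 + 1 / (k : ℝ) ^ γ)
      ≤ ((n : ℝ) - ℓ) * (((n : ℝ) - 1) * ((k : ℝ) ^ γ + 1) / ((n : ℝ) * (k : ℝ) ^ γ)) :=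
        sub_mul_one_add_inv_le hn hA (Nat.cast_nonneg ℓ) hkn
    _ < ((n : ℝ) - ℓ) * (1 - 1 / (k : ℝ) ^ δ) :=
        mul_lt_mul_of_pos_left (div_lt_one_sub_one_div (by positivity) hpos hX) (by linarith)

theorem stmt_10 (n ℓ k : ℕ) (hℓ : 1 ≤ ℓ) (hℓn : ℓ < n) (hk1 : 1 < k)
    (hk : k < n) (γ δ : ℝ)
    (hpos : (n : ℝ) * (k : ℝ) ^ γ - ((n : ℝ) - 1) * ((k : ℝ) ^ γ + 1) > 0)
    (hγ : γ > Real.logb k ((n : ℝ) - 1))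
    (hδ : δ > Real.logb k ((n : ℝ) * (k : ℝ) ^ γ /
      ((n : ℝ) * (k : ℝ) ^ γ - ((n : ℝ) - 1) * ((k : ℝ) ^ γ + 1)))) :
    ((n : ℝ) - ℓ) * (1 - 1 / (k : ℝ) ^ δ) >
    ((k : ℝ) - ℓ) * (1 + 1 / (k : ℝ) ^ γ) :=
  stmt_10_general n ℓ k hℓn hk1 hk γ δ hpos hδ
end
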